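/- Let E be a directed graph, K a field, and c a cycle without exits based at a vertex v. Then the ℤ-graded L_K(E)-module KL_{c^∞} is graded isomorphic to N_{vc} = L_K(E)v (with its grading induced from L_K(E)), and both are graded simple L_K(E)-modules. -/

import Mathlib

open scoped Classical

/-- A directed graph: vertices, edges, source and range maps. -/
structure DirGraph : Type 1 where
  V : Type
  E : Type
  s : E → V
  r : E → V

namespace DirGraph

variable (G : DirGraph)

/-- A finite path: a source vertex together with a compatible list of edges
(the empty list gives the path of length 0 at `src`). -/
structure FinPath where
  src : G.V
  edges : List G.E
  src_eq : ∀ e ∈ edges.head?, G.s e = src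
  chain : edges.Chain' (fun e f => G.r e = G.s f)

variable {G}

/-- The range of a finite path. -/
def FinPath.rng (μ : G.FinPath) : G.V :=
  ((μ.edges.getLast?).map G.r).getD μ.src

/-- The length of a finite path. -/
def FinPath.length (μ : G.FinPath) : ℕ := μ.edges.length

variable (G)

/-- An infinite path. -/
structure InfPath where
  edges : ℕ → G.E
  chain : ∀ n, G.r (edges n) = G.s (edges (n + 1))

/-- The source of an infinite path. -/
def InfPath.src {G : DirGraph} (p : G.InfPath) : G.V := G.s (p.edges 0)

def IsSink (v : G.V) : Prop := ∀ e, G.s e ≠ v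

def IsInfEmitter (v : G.V) : Prop := {e | G.s e = v}.Infinite

def IsSingular (v : G.V) : Prop := IsSink G v ∨ IsInfEmitter G v

/-- Boundary paths: infinite paths, together with finite paths ending in a singular vertex. -/
def BPath : Type := {x : G.FinPath ⊕ G.InfPath // ∀ μ, x = Sum.inl μ → IsSingular G μ.rng}

variable {G}

/-- The source of a boundary path. -/
def BPath.src (x : G.BPath) : G.V :=
  match x.1 with
  | Sum.inl μ => μ.src
  | Sum.inr p => p.src

def BPath.IsInfinite (x : G.BPath) : Prop := ∃ p, x.1 = Sum.inr p

/-- `IsCat μ p x` means `x = μ p`, i.e. `x` is the concatenation of the finite path `μ`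
with the boundary path `p` (in particular `r(μ) = s(p)`). -/
def IsCat (μ : G.FinPath) (p x : G.BPath) : Prop :=
  μ.rng = p.src ∧
  match p.1, x.1 with
  | Sum.inl q, Sum.inl ξ => ξ.src = μ.src ∧ ξ.edges = μ.edges ++ q.edges
  | Sum.inr q, Sum.inr ξ =>
      (∀ (i : ℕ) (h : i < μ.edges.length), ξ.edges i = μ.edges.get ⟨i, h⟩) ∧
      (∀ i : ℕ, ξ.edges (μ.edges.length + i) = q.edges i)
  | _, _ => False

/-- `x ∼_k y` : tail equivalence with lag `k`. -/
def TailEqLag (x y : G.BPath) (k : ℤ) : Prop :=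
  ∃ (μ ν : G.FinPath) (p : G.BPath),
    IsCat μ p x ∧ IsCat ν p y ∧ (μ.length : ℤ) - (ν.length : ℤ) = k

/-- Tail equivalence. -/
def TailEq (x y : G.BPath) : Prop := ∃ k, TailEqLag x y k

/-- The tail-equivalence class (orbit) of a boundary path. -/
def orbit (x : G.BPath) : Set G.BPath := {y | TailEq y x}

/-- A closed path: positive length, same source and range. -/
def FinPath.IsClosed (c : G.FinPath) : Prop := 0 < c.length ∧ c.rng = c.src

/-- A boundary path is rational if it is tail equivalent to `c^∞` for some closed path `c`;
here `c^∞` is characterized as the unique boundary path `p` with `p = c p`. -/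
def IsRational (x : G.BPath) : Prop :=
  ∃ (c : G.FinPath) (p : G.BPath), 0 < c.length ∧ IsCat c p p ∧ TailEq x p

/-- A simple closed path: a closed path which is not a proper power of a closed path. -/
def FinPath.IsSimpleClosed (c : G.FinPath) : Prop :=
  c.IsClosed ∧
    ¬ ∃ (d : G.FinPath) (n : ℕ), 2 ≤ n ∧ d.IsClosed ∧ c.src = d.src ∧
        c.edges = (List.replicate n d.edges).flatten

/-- A cycle: a closed path passing through no vertex twice. -/
def FinPath.IsCycle (c : G.FinPath) : Prop := c.IsClosed ∧ (c.edges.map G.s).Nodup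

/-- An exit for a finite path. -/
def FinPath.HasExit (c : G.FinPath) : Prop :=
  ∃ (i : ℕ) (h : i < c.edges.length) (e : G.E),
    G.s e = G.s (c.edges.get ⟨i, h⟩) ∧ e ≠ c.edges.get ⟨i, h⟩

/-- `c` is a rotation of `d`. -/
def FinPath.IsRotationOf (c d : G.FinPath) : Prop := ∃ i, c.edges = d.edges.rotate i

/-- A maximal cycle: a cycle such that any cycle from which there is a finite path to its
source is a rotation of it. -/
def FinPath.IsMaxCycle (c : G.FinPath) : Prop :=
  c.IsCycle ∧ ∀ d : G.FinPath, d.IsCycle →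
    (∃ μ : G.FinPath, μ.src = d.src ∧ μ.rng = c.src) → d.IsRotationOf c

/-- A maximal sink: a sink with no finite path from the source of any cycle to it. -/
def IsMaxSink (G : DirGraph) (v : G.V) : Prop :=
  IsSink G v ∧ ¬ ∃ (d μ : G.FinPath), d.IsCycle ∧ μ.src = d.src ∧ μ.rng = v

/-- A graph is row-finite if every vertex emits finitely many edges. -/
def RowFinite (G : DirGraph) : Prop := ∀ v : G.V, {e | G.s e = v}.Finite

/-- The set of predecessors of a vertex. -/
def preds (G : DirGraph) (v : G.V) : Set G.V := {w | ∃ μ : G.FinPath, μ.src = w ∧ μ.rng = v}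

/-- The finite path of length 0 at a vertex. -/
def vertexPath (G : DirGraph) (v : G.V) : G.FinPath :=
  ⟨v, [], by intro e he; simp at he, List.isChain_nil⟩

/-- A singular vertex, seen as a boundary path. -/
def vertexBPath (G : DirGraph) (v : G.V) (h : IsSingular G v) : G.BPath :=
  ⟨Sum.inl (vertexPath G v), by
    intro μ hμ
    injection hμ with h2
    subst h2
    exact h⟩

/-- The finite path consisting of a single edge. -/
def singleE (G : DirGraph) (e : G.E) : G.FinPath :=
  ⟨G.s e, [e], by
    intro f hf
    simp only [List.head?_cons, Option.mem_def, Option.some.injEq] at hf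
    subst hf
    rfl, List.isChain_singleton e⟩

/-- `a_μ`: the product of the values of `a` along a finite path. -/
def aval {G : DirGraph} {K : Type} [Field K] (a : G.E → K) (μ : G.FinPath) : K :=
  (μ.edges.map a).prod

/-! ## The Leavitt path algebra -/

/-- Generators of the Leavitt path algebra: vertices, edges and ghost edges. -/
inductive Gen (G : DirGraph) : Type
  | vtx : G.V → Gen G
  | edg : G.E → Gen G
  | ghd : G.E → Gen G

/-- The defining relations of the Leavitt path algebra. -/
inductive LRel (G : DirGraph) (K : Type) [Field K] :
    FreeAlgebra K (Gen G) → FreeAlgebra K (Gen G) → Prop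
  | vv_eq (v : G.V) :
      LRel G K (FreeAlgebra.ι K (Gen.vtx v) * FreeAlgebra.ι K (Gen.vtx v))
        (FreeAlgebra.ι K (Gen.vtx v))
  | vv_ne {v w : G.V} (h : v ≠ w) :
      LRel G K (FreeAlgebra.ι K (Gen.vtx v) * FreeAlgebra.ι K (Gen.vtx w)) 0
  | e1l (e : G.E) :
      LRel G K (FreeAlgebra.ι K (Gen.vtx (G.s e)) * FreeAlgebra.ι K (Gen.edg e))
        (FreeAlgebra.ι K (Gen.edg e))
  | e1r (e : G.E) :
      LRel G K (FreeAlgebra.ι K (Gen.edg e) * FreeAlgebra.ι K (Gen.vtx (G.r e)))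
        (FreeAlgebra.ι K (Gen.edg e))
  | e2l (e : G.E) :
      LRel G K (FreeAlgebra.ι K (Gen.vtx (G.r e)) * FreeAlgebra.ι K (Gen.ghd e))
        (FreeAlgebra.ι K (Gen.ghd e))
  | e2r (e : G.E) :
      LRel G K (FreeAlgebra.ι K (Gen.ghd e) * FreeAlgebra.ι K (Gen.vtx (G.s e)))
        (FreeAlgebra.ι K (Gen.ghd e))
  | ck1_eq (e : G.E) :
      LRel G K (FreeAlgebra.ι K (Gen.ghd e) * FreeAlgebra.ι K (Gen.edg e))
        (FreeAlgebra.ι K (Gen.vtx (G.r e)))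
  | ck1_ne {e f : G.E} (h : e ≠ f) :
      LRel G K (FreeAlgebra.ι K (Gen.ghd e) * FreeAlgebra.ι K (Gen.edg f)) 0
  | ck2 (v : G.V) (hfin : {e | G.s e = v}.Finite) (hne : ∃ e, G.s e = v) :
      LRel G K (FreeAlgebra.ι K (Gen.vtx v))
        (∑ e ∈ hfin.toFinset, FreeAlgebra.ι K (Gen.edg e) * FreeAlgebra.ι K (Gen.ghd e))

/-- The Leavitt path algebra of `G` over `K`. -/
abbrev LPA (G : DirGraph) (K : Type) [Field K] : Type := RingQuot (LRel G K)

/-- The image of a vertex in the Leavitt path algebra. -/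
def ofV (G : DirGraph) (K : Type) [Field K] (v : G.V) : LPA G K :=
  RingQuot.mkAlgHom K (LRel G K) (FreeAlgebra.ι K (Gen.vtx v))

/-- The image of an edge in the Leavitt path algebra. -/
def ofE (G : DirGraph) (K : Type) [Field K] (e : G.E) : LPA G K :=
  RingQuot.mkAlgHom K (LRel G K) (FreeAlgebra.ι K (Gen.edg e))

/-- The image of a ghost edge in the Leavitt path algebra. -/
def ofG (G : DirGraph) (K : Type) [Field K] (e : G.E) : LPA G K :=
  RingQuot.mkAlgHom K (LRel G K) (FreeAlgebra.ι K (Gen.ghd e))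

/-- The element `μ` of the Leavitt path algebra associated to a finite path `μ`. -/
def pathElem (G : DirGraph) (K : Type) [Field K] (μ : G.FinPath) : LPA G K :=
  ofV G K μ.src * (μ.edges.map (ofE G K)).prod

/-- The element `μ^*` of the Leavitt path algebra associated to a finite path `μ`. -/
def pathStarElem (G : DirGraph) (K : Type) [Field K] (μ : G.FinPath) : LPA G K :=
  (μ.edges.reverse.map (ofG G K)).prod * ofV G K μ.src

/-- The degree-`n` homogeneous component of the canonical `ℤ`-grading of the Leavitt
path algebra: the span of the monomials `μ ν^*` with `|μ| - |ν| = n`. -/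
def LPAdeg (G : DirGraph) (K : Type) [Field K] (n : ℤ) : Submodule K (LPA G K) :=
  Submodule.span K {x | ∃ μ ν : G.FinPath, μ.rng = ν.rng ∧
    (μ.length : ℤ) - (ν.length : ℤ) = n ∧ x = pathElem G K μ * pathStarElem G K ν}

/-- `W` is a `ℤ`-grading making `M` a graded module over the canonically graded
Leavitt path algebra. -/
def IsModuleGrading (G : DirGraph) (K : Type) [Field K] (M : Type) [AddCommGroup M]
    [Module K M] [Module (LPA G K) M] (W : ℤ → Submodule K M) : Prop :=
  DirectSum.IsInternal W ∧
    ∀ (m k : ℤ) (a : LPA G K) (y : M), a ∈ LPAdeg G K m → y ∈ W k → a • y ∈ W (m + k)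

/-- A set is graded (with respect to a grading `W`) if each of its elements is a finite sum
of homogeneous elements of the set. -/
def GradedCarrier {K M : Type} [Field K] [AddCommGroup M] [Module K M]
    (W : ℤ → Submodule K M) (S : Set M) : Prop :=
  ∀ m ∈ S, ∃ l : List M, (∀ z ∈ l, z ∈ S ∧ ∃ k, z ∈ W k) ∧ l.sum = m

/-- A graded isomorphism between graded modules over the Leavitt path algebra. -/
def GradedIsoLPA (G : DirGraph) (K : Type) [Field K] (M N : Type)
    [AddCommGroup M] [AddCommGroup N] [Module K M] [Module K N]
    [Module (LPA G K) M] [Module (LPA G K) N]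
    (W : ℤ → Submodule K M) (W' : ℤ → Submodule K N) : Prop :=
  ∃ f : M ≃ₗ[LPA G K] N, (∀ k, ∀ m ∈ W k, f m ∈ W' k) ∧ ∀ k, ∀ n ∈ W' k, f.symm n ∈ W k

/-- A module over the Leavitt path algebra is unital if it is generated by the images of the
vertices. -/
def IsUnitalModule (G : DirGraph) (K : Type) [Field K] (M : Type) [AddCommGroup M]
    [Module (LPA G K) M] : Prop :=
  ∀ m : M, m ∈ Submodule.span (LPA G K) {y : M | ∃ (v : G.V) (m' : M), y = ofV G K v • m'}

/-! ## Chen modules, specified by a basis and the action of the generators -/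

/-- A specification of the (twisted) Chen module attached to a boundary path `x`:
an `L_K(E)`-module `M` which is a `K'`-vector space with basis the tail-equivalence class
of `x`, the generators acting by the τ-twisted shift formulas. Here `K ⊆ K'` is a field
extension and `τ : E¹ → K'` is a family of nonzero scalars. -/
structure ChenSpecT (G : DirGraph) (K K' : Type) [Field K] [Field K'] [Algebra K K']
    (τ : G.E → K') (x : G.BPath) (M : Type) [AddCommGroup M] [Module K' M]
    [Module (LPA G K) M] : Type where
  tau_ne : ∀ e, τ e ≠ 0
  basis : Module.Basis (orbit x) K' M
  act_v : ∀ (v : G.V) (p : orbit x),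
    ofV G K v • basis p = if v = BPath.src (p : G.BPath) then basis p else 0
  act_e : ∀ (e : G.E) (p q : orbit x), IsCat (singleE G e) (p : G.BPath) (q : G.BPath) →
    ofE G K e • basis p = τ e • basis q
  act_e_zero : ∀ (e : G.E) (p : orbit x),
    (¬ ∃ q : G.BPath, IsCat (singleE G e) (p : G.BPath) q) → ofE G K e • basis p = 0
  act_g : ∀ (e : G.E) (p q : orbit x), IsCat (singleE G e) (p : G.BPath) (q : G.BPath) →
    ofG G K e • basis q = (τ e)⁻¹ • basis p
  act_g_zero : ∀ (e : G.E) (q : orbit x),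
    (¬ ∃ p : G.BPath, IsCat (singleE G e) p (q : G.BPath)) → ofG G K e • basis q = 0

/-- Specification of the Chen module `V_{[x]}^a` twisted by `a : E¹ → K^*`
(`a = 1` gives `V_{[x]}`). -/
abbrev ChenSpec (G : DirGraph) (K : Type) [Field K] (a : G.E → K) (x : G.BPath) (M : Type)
    [AddCommGroup M] [Module K M] [Module (LPA G K) M] : Type :=
  ChenSpecT G K K a x M

/-- The canonical grading on a Chen module: the degree-`k` component is spanned by the basis
elements tail-equivalent to `x` with lag `k`. -/
def chenW {G : DirGraph} {K' : Type} [Field K'] {x : G.BPath} {M : Type}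
    [AddCommGroup M] [Module K' M] (b : Module.Basis (orbit x) K' M) (k : ℤ) : Submodule K' M :=
  Submodule.span K' (⇑b '' {p : orbit x | TailEqLag (p : G.BPath) x k})

/-! ## The module `K L_x` -/

/-- The set `L_x` of pairs `(y, k)` with `y ∼_k x`. -/
def Lset (G : DirGraph) (x : G.BPath) : Set (G.BPath × ℤ) := {yk | TailEqLag yk.1 x yk.2}

/-- The underlying `K`-vector space of the module `K L_x`, with basis `L_x`. -/
abbrev KLCarrier (G : DirGraph) (K : Type) [Field K] (x : G.BPath) : Type := (Lset G x) →₀ K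

/-- Specification of the `L_K(E)`-module structure on `K L_x`, given by
`(μ ν^*) ⬝ (y, k) = (μ p, |μ| - |ν| + k)` when `y = ν p`, and `0` otherwise. The module
structure is encoded as a `K`-algebra homomorphism `ρ` to the endomorphism algebra. -/
def KLSpec (G : DirGraph) (K : Type) [Field K] (x : G.BPath)
    (ρ : LPA G K →ₐ[K] Module.End K (KLCarrier G K x)) : Prop :=
  (∀ (μ ν : G.FinPath), μ.rng = ν.rng → ∀ (yk zk : Lset G x) (p : G.BPath),
      IsCat ν p (yk : G.BPath × ℤ).1 → IsCat μ p (zk : G.BPath × ℤ).1 →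
      (zk : G.BPath × ℤ).2 = (yk : G.BPath × ℤ).2 + (μ.length : ℤ) - (ν.length : ℤ) →
      ρ (pathElem G K μ * pathStarElem G K ν) (Finsupp.single yk 1) = Finsupp.single zk 1) ∧
  (∀ (μ ν : G.FinPath), μ.rng = ν.rng → ∀ yk : Lset G x,
      (¬ ∃ p : G.BPath, IsCat ν p (yk : G.BPath × ℤ).1) →
      ρ (pathElem G K μ * pathStarElem G K ν) (Finsupp.single yk 1) = 0)

/-- The canonical grading of `K L_x`: `(y, k)` is homogeneous of degree `k`. -/
noncomputable def KLgr (G : DirGraph) (K : Type) [Field K] (x : G.BPath) (k : ℤ) :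
    Submodule K (KLCarrier G K x) :=
  Submodule.span K {m | ∃ yk : Lset G x, (yk : G.BPath × ℤ).2 = k ∧ m = Finsupp.single yk 1}

end DirGraph

/-!
Along `c^∞` every vertex emits only the next edge `e` of `c^∞`, so (CK2) reads `s(e) = e e^*`
there and `μ ν^* = (μ e)(ν e)^*` whenever `ν` is an initial segment of `c^∞`. Hence the monomial
`μ ν^*` read off a witness `y = μ p`, `c^∞ = ν p` of `y ∼_k c^∞` does not depend on the witness,
and `(y, k) ↦ μ ν^*` inverts the orbit map `a ↦ a ⬝ (c^∞, 0)` on `L_K(E) v`, which is spanned by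
the monomials `μ ν^*` with `ν` an initial segment of `c^∞`. Both maps preserve degrees.

`K L_x` is graded simple for every infinite path `x`: the finitely many paths in the support of a
nonzero homogeneous element `z` all leave one of them, `y`, within `N` steps, so
`(y_{≥N})^0 (y_{<N})^*` maps `z` to a nonzero multiple of a single basis vector, and some `α β^*`
maps that one to any other. Graded simplicity passes to `L_K(E) v` through the isomorphism.
-/

theorem Finsupp.linearMap_apply_eq_smul_of_apply_single {R α N : Type*} [Semiring R]
    [AddCommMonoid N] [Module R N] (f : (α →₀ R) →ₗ[R] N) (z : α →₀ R) (a : α)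
    (h : ∀ b ∈ z.support, b ≠ a → f (Finsupp.single b 1) = 0) :
    f z = z a • f (Finsupp.single a 1) := by
  have hsingle : ∀ b, f (Finsupp.single b (z b)) = z b • f (Finsupp.single b 1) := fun b => by
    rw [← map_smul, Finsupp.smul_single_one]
  conv_lhs => rw [← Finsupp.sum_single z]
  rw [map_finsuppSum, Finsupp.sum, Finset.sum_eq_single a
    (fun b hb hba => by rw [hsingle, h b hb hba, smul_zero])
    (fun ha => by rw [Finsupp.notMem_support_iff.1 ha, Finsupp.single_zero, map_zero]),
    hsingle]

theorem Submodule.mul_mem_span_of_forall_mul_mem {R A : Type*} [CommSemiring R] [Semiring A]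
    [Algebra R A] {S : Set A} {a : A} (h : ∀ m ∈ S, a * m ∈ Submodule.span R S) {m : A}
    (hm : m ∈ Submodule.span R S) : a * m ∈ Submodule.span R S :=
  (Submodule.span_le (p := (Submodule.span R S).comap (LinearMap.mulLeft R a))).2 h hm

namespace DirGraph

open Filter

variable {G : DirGraph}

theorem FinPath.ext' {μ ν : G.FinPath} (h1 : μ.src = ν.src) (h2 : μ.edges = ν.edges) :
    μ = ν := by
  cases μ; cases ν; simp_all

theorem InfPath.ext' {p q : G.InfPath} (h : ∀ i, p.edges i = q.edges i) : p = q := by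
  cases p; cases q; simp only [InfPath.mk.injEq]; exact funext h

theorem FinPath.rng_eq_getLast {μ : G.FinPath} (h : μ.edges ≠ []) :
    μ.rng = G.r (μ.edges.getLast h) := by
  simp [FinPath.rng, List.getLast?_eq_some_getLast h]

theorem FinPath.rng_of_edges_eq_nil {μ : G.FinPath} (h : μ.edges = []) : μ.rng = μ.src := by
  simp [FinPath.rng, h]

theorem isCat_vertexPath (x : G.BPath) : IsCat (vertexPath G x.src) x x := by
  obtain ⟨x | x, hx⟩ := x
  · exact ⟨rfl, rfl, rfl⟩
  · exact ⟨rfl, fun i h => absurd h (Nat.not_lt_zero i), fun i => by simp [vertexPath]⟩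

theorem tailEqLag_refl (x : G.BPath) : TailEqLag x x 0 :=
  ⟨_, _, x, isCat_vertexPath x, isCat_vertexPath x, sub_self _⟩

def InfPath.toBPath (ξ : G.InfPath) : G.BPath := ⟨Sum.inr ξ, by intro μ h; simp at h⟩

theorem InfPath.toBPath_injective : Function.Injective (InfPath.toBPath (G := G)) := by
  intro ξ η h
  simpa [InfPath.toBPath] using congrArg Subtype.val h

def InfPath.take (ξ : G.InfPath) (n : ℕ) : G.FinPath where
  src := ξ.src
  edges := (List.range n).map ξ.edges
  src_eq := by
    intro e he
    cases n with
    | zero => simp at he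
    | succ m =>
      rw [List.range_succ_eq_map] at he
      simp only [List.map_cons, List.head?_cons, Option.mem_def, Option.some.injEq] at he
      rw [← he]; rfl
  chain := by
    show List.IsChain _ _
    rw [List.isChain_map]
    cases n with
    | zero => simp
    | succ m => exact (List.isChain_range_succ _ _).2 fun i _ => ξ.chain i

def InfPath.drop (ξ : G.InfPath) (n : ℕ) : G.InfPath where
  edges i := ξ.edges (n + i)
  chain i := by simpa only [Nat.add_assoc] using ξ.chain (n + i)

namespace InfPath

variable (ξ : G.InfPath)

@[simp] theorem take_edges_length (n : ℕ) : (ξ.take n).edges.length = n := by simp [take]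

@[simp] theorem take_length (n : ℕ) : (ξ.take n).length = n := by simp [FinPath.length]

theorem take_edges_get (n i : ℕ) (h : i < (ξ.take n).edges.length) :
    (ξ.take n).edges.get ⟨i, h⟩ = ξ.edges i := by
  simp [take]

theorem take_rng (n : ℕ) : (ξ.take n).rng = G.s (ξ.edges n) := by
  cases n with
  | zero => exact FinPath.rng_of_edges_eq_nil (by simp [take])
  | succ m =>
    have h : (ξ.take (m + 1)).edges ≠ [] := by simp [take]
    rw [FinPath.rng_eq_getLast h, ← ξ.chain m]
    simp [take, List.range_succ]

@[simp] theorem drop_edges (n i : ℕ) : (ξ.drop n).edges i = ξ.edges (n + i) := rfl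

@[simp] theorem drop_drop (m n : ℕ) : (ξ.drop m).drop n = ξ.drop (m + n) :=
  ext' fun i => by simp [Nat.add_assoc]

@[simp] theorem drop_zero : ξ.drop 0 = ξ := ext' fun i => by simp

theorem drop_eq_drop_add {η ζ : G.InfPath} {m n : ℕ} (h : η.drop m = ζ.drop n) (d : ℕ) :
    η.drop (m + d) = ζ.drop (n + d) := by
  rw [← drop_drop, h, drop_drop]

theorem edges_mod_of_drop_eq {n : ℕ} (h : ξ.drop n = ξ) (l : ℕ) :
    ξ.edges (l % n) = ξ.edges l := by
  have hq : ∀ q, ξ.drop (n * q) = ξ := by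
    intro q
    induction q with
    | zero => simp
    | succ q ih => rw [Nat.mul_succ, ← drop_drop, ih, h]
  conv_rhs => rw [← Nat.div_add_mod l n, ← drop_edges, hq]

end InfPath

theorem isCat_take_drop (ξ : G.InfPath) (n : ℕ) :
    IsCat (ξ.take n) (ξ.drop n).toBPath ξ.toBPath :=
  ⟨by rw [InfPath.take_rng]; rfl,
    fun i h => (ξ.take_edges_get n i h).symm, fun i => by simp⟩

theorem isCat_toBPath_iff {μ : G.FinPath} {p : G.BPath} {ξ : G.InfPath} :
    IsCat μ p ξ.toBPath ↔ μ = ξ.take μ.length ∧ p = (ξ.drop μ.length).toBPath := by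
  refine ⟨fun h => ?_, fun ⟨hμ, hp⟩ => by rw [hμ, hp]; exact isCat_take_drop ξ _⟩
  obtain ⟨q | q, hq⟩ := p
  · exact h.2.elim
  obtain ⟨hrng, hpre, hsuf⟩ := h
  obtain rfl : q = ξ.drop μ.length := InfPath.ext' fun i => (hsuf i).symm
  refine ⟨FinPath.ext' ?_ (List.ext_get (by simp [FinPath.length]) fun i h _ => ?_), rfl⟩
  · rcases he : μ.edges with _ | ⟨e, rest⟩
    · have h0 : μ.length = 0 := by simp [FinPath.length, he]
      rw [← FinPath.rng_of_edges_eq_nil he, hrng]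
      show G.s (ξ.edges (μ.length + 0)) = ξ.src
      rw [h0]; rfl
    · have hs := μ.src_eq e (by simp [he])
      have h0 := hpre 0 (by simp [he])
      simp only [he, List.get_eq_getElem, List.getElem_cons_zero] at h0
      rw [← hs, ← h0]; rfl
  · rw [InfPath.take_edges_get, hpre i h]

theorem exists_eq_toBPath_of_isCat {μ : G.FinPath} {ξ : G.InfPath} {x : G.BPath}
    (h : IsCat μ ξ.toBPath x) : ∃ η : G.InfPath, x = η.toBPath := by
  obtain ⟨x | x, hx⟩ := x
  · exact h.2.elim
  · exact ⟨x, rfl⟩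

theorem exists_eq_toBPath_of_isCat_self {c : G.FinPath} {p : G.BPath} (hc : 0 < c.length)
    (h : IsCat c p p) : ∃ ξ : G.InfPath, p = ξ.toBPath := by
  obtain ⟨q | q, hq⟩ := p
  · have := congrArg List.length h.2.2
    simp only [List.length_append] at this
    simp only [FinPath.length] at hc
    omega
  · exact ⟨q, rfl⟩

def FinPath.appendInf (μ : G.FinPath) (ξ : G.InfPath) (h : μ.rng = ξ.src) : G.InfPath where
  edges i :=
    if hi : i < μ.edges.length then μ.edges.get ⟨i, hi⟩ else ξ.edges (i - μ.edges.length)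
  chain i := by
    show G.r (if hi : i < μ.edges.length then μ.edges.get ⟨i, hi⟩
        else ξ.edges (i - μ.edges.length)) =
      G.s (if hi : i + 1 < μ.edges.length then μ.edges.get ⟨i+1, hi⟩
        else ξ.edges (i + 1 - μ.edges.length))
    rcases lt_trichotomy (i + 1) μ.edges.length with h1 | h1 | h1
    · rw [dif_pos h1, dif_pos (Nat.lt_of_succ_lt h1)]
      exact List.isChain_iff_getElem.mp μ.chain i h1
    · have hne : μ.edges ≠ [] := by rintro hc; simp [hc] at h1
      rw [dif_pos (by omega), dif_neg (by omega), show i + 1 - μ.edges.length = 0 by omega]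
      have hlast : μ.edges.get ⟨i, by omega⟩ = μ.edges.getLast hne := by
        simp only [List.getLast_eq_getElem, List.get_eq_getElem]
        congr 1; omega
      rw [hlast, ← FinPath.rng_eq_getLast hne, h]; rfl
    · rw [dif_neg (by omega), dif_neg (by omega)]
      simpa only [show i - μ.edges.length + 1 = i + 1 - μ.edges.length by omega]
        using ξ.chain (i - μ.edges.length)

theorem isCat_appendInf (μ : G.FinPath) (ξ : G.InfPath) (h : μ.rng = ξ.src) :
    IsCat μ ξ.toBPath (μ.appendInf ξ h).toBPath :=
  ⟨h, fun i hi => by simp [FinPath.appendInf, hi], fun i => by simp [FinPath.appendInf]⟩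

theorem tailEqLag_toBPath_iff {η ζ : G.InfPath} {k : ℤ} :
    TailEqLag η.toBPath ζ.toBPath k ↔
      ∃ m n : ℕ, (m : ℤ) - n = k ∧ η.drop m = ζ.drop n := by
  constructor
  · rintro ⟨μ, ν, p, hμ, hν, rfl⟩
    rw [isCat_toBPath_iff] at hμ hν
    exact ⟨μ.length, ν.length, rfl, InfPath.toBPath_injective (hμ.2.symm.trans hν.2)⟩
  · rintro ⟨m, n, rfl, h⟩
    refine ⟨η.take m, ζ.take n, (η.drop m).toBPath, isCat_take_drop η m, ?_, by simp⟩
    rw [h]; exact isCat_take_drop ζ n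

theorem exists_eq_toBPath_of_tailEqLag {y : G.BPath} {ζ : G.InfPath} {k : ℤ}
    (h : TailEqLag y ζ.toBPath k) : ∃ η : G.InfPath, y = η.toBPath := by
  obtain ⟨μ, ν, p, hμ, hν, -⟩ := h
  rw [(isCat_toBPath_iff.1 hν).2] at hμ
  exact exists_eq_toBPath_of_isCat hμ

theorem tailEqLag_sub {a b : G.BPath} {ζ : G.InfPath} {m m' : ℤ}
    (ha : TailEqLag a ζ.toBPath m) (hb : TailEqLag b ζ.toBPath m') : TailEqLag b a (m' - m) := by
  obtain ⟨ηa, rfl⟩ := exists_eq_toBPath_of_tailEqLag ha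
  obtain ⟨ηb, rfl⟩ := exists_eq_toBPath_of_tailEqLag hb
  obtain ⟨ma, na, rfl, hab⟩ := tailEqLag_toBPath_iff.1 ha
  obtain ⟨mb, nb, rfl, hbb⟩ := tailEqLag_toBPath_iff.1 hb
  refine tailEqLag_toBPath_iff.2 ⟨mb + na, ma + nb, by push_cast; ring, ?_⟩
  rw [InfPath.drop_eq_drop_add hbb, InfPath.drop_eq_drop_add hab, Nat.add_comm nb,
    Nat.add_comm na]

section

variable (K : Type) [Field K]

theorem ofV_mul_self (v : G.V) : ofV G K v * ofV G K v = ofV G K v := by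
  simp only [ofV, ← map_mul]
  exact RingQuot.mkAlgHom_rel K (LRel.vv_eq v)

theorem ofV_mul_ofV_of_ne {v w : G.V} (h : v ≠ w) : ofV G K v * ofV G K w = 0 := by
  simp only [ofV, ← map_mul]
  rw [RingQuot.mkAlgHom_rel K (LRel.vv_ne h), map_zero]

theorem ofV_s_mul_ofE (e : G.E) : ofV G K (G.s e) * ofE G K e = ofE G K e := by
  simp only [ofV, ofE, ← map_mul]
  exact RingQuot.mkAlgHom_rel K (LRel.e1l e)

theorem ofE_mul_ofV_r (e : G.E) : ofE G K e * ofV G K (G.r e) = ofE G K e := by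
  simp only [ofV, ofE, ← map_mul]
  exact RingQuot.mkAlgHom_rel K (LRel.e1r e)

theorem ofV_r_mul_ofG (e : G.E) : ofV G K (G.r e) * ofG G K e = ofG G K e := by
  simp only [ofV, ofG, ← map_mul]
  exact RingQuot.mkAlgHom_rel K (LRel.e2l e)

theorem ofG_mul_ofV_s (e : G.E) : ofG G K e * ofV G K (G.s e) = ofG G K e := by
  simp only [ofV, ofG, ← map_mul]
  exact RingQuot.mkAlgHom_rel K (LRel.e2r e)

theorem ofG_mul_ofE_self (e : G.E) : ofG G K e * ofE G K e = ofV G K (G.r e) := by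
  simp only [ofV, ofE, ofG, ← map_mul]
  exact RingQuot.mkAlgHom_rel K (LRel.ck1_eq e)

theorem ofG_mul_ofE_of_ne {e f : G.E} (h : e ≠ f) : ofG G K e * ofE G K f = 0 := by
  simp only [ofE, ofG, ← map_mul]
  rw [RingQuot.mkAlgHom_rel K (LRel.ck1_ne h), map_zero]

theorem ofV_eq_ofE_mul_ofG_of_unique {v : G.V} {e : G.E} (he : ∀ f, G.s f = v ↔ f = e) :
    ofV G K v = ofE G K e * ofG G K e := by
  have hset : {f | G.s f = v} = {e} := Set.ext he
  have hfin : {f : G.E | G.s f = v}.Finite := hset ▸ Set.finite_singleton e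
  have hrel := RingQuot.mkAlgHom_rel K (LRel.ck2 (G := G) (K := K) v hfin ⟨e, (he e).2 rfl⟩)
  rw [show hfin.toFinset = {e} by ext f; simp [hset], Finset.sum_singleton] at hrel
  simpa only [ofV, ofE, ofG, ← map_mul] using hrel

theorem ofE_mul_ofV_of_ne {e : G.E} {w : G.V} (h : G.r e ≠ w) :
    ofE G K e * ofV G K w = 0 := by
  rw [← ofE_mul_ofV_r K e, mul_assoc, ofV_mul_ofV_of_ne K h, mul_zero]

theorem ofG_mul_ofV_of_ne {e : G.E} {w : G.V} (h : G.s e ≠ w) :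
    ofG G K e * ofV G K w = 0 := by
  rw [← ofG_mul_ofV_s K e, mul_assoc, ofV_mul_ofV_of_ne K h, mul_zero]

theorem LPA.induction {P : LPA G K → Prop} (h_alg : ∀ k, P (algebraMap K _ k))
    (hV : ∀ v, P (ofV G K v)) (hE : ∀ e, P (ofE G K e)) (hG : ∀ e, P (ofG G K e))
    (hadd : ∀ a b, P a → P b → P (a + b)) (hmul : ∀ a b, P a → P b → P (a * b))
    (a : LPA G K) : P a := by
  obtain ⟨a, rfl⟩ := RingQuot.mkAlgHom_surjective K (LRel G K) a
  induction a using FreeAlgebra.induction with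
  | grade0 k => simpa only [AlgHom.commutes] using h_alg k
  | grade1 x => cases x with
    | vtx v => exact hV v
    | edg e => exact hE e
    | ghd e => exact hG e
  | mul a b ha hb => simpa only [map_mul] using hmul _ _ ha hb
  | add a b ha hb => simpa only [map_add] using hadd _ _ ha hb

@[simp] theorem pathElem_vertexPath (v : G.V) : pathElem G K (vertexPath G v) = ofV G K v := by
  simp [pathElem, vertexPath]

theorem ofV_src_mul_pathElem (μ : G.FinPath) :
    ofV G K μ.src * pathElem G K μ = pathElem G K μ := by
  rw [pathElem, ← mul_assoc, ofV_mul_self]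

theorem ofV_mul_pathElem_of_ne {μ : G.FinPath} {w : G.V} (h : w ≠ μ.src) :
    ofV G K w * pathElem G K μ = 0 := by
  rw [pathElem, ← mul_assoc, ofV_mul_ofV_of_ne K h, zero_mul]

theorem pathElem_of_edges_eq_nil {μ : G.FinPath} (h : μ.edges = []) :
    pathElem G K μ = ofV G K μ.src := by
  simp [pathElem, h]

theorem pathStarElem_mem_span_ofV (ν : G.FinPath) (a : LPA G K) :
    a * pathStarElem G K ν ∈ Submodule.span (LPA G K) {ofV G K ν.src} := by
  rw [pathStarElem, ← mul_assoc, ← smul_eq_mul]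
  exact Submodule.smul_mem _ _ (Submodule.mem_span_singleton_self _)

namespace InfPath

variable (ξ : G.InfPath)

theorem pathElem_take_succ (n : ℕ) :
    pathElem G K (ξ.take (n + 1)) = pathElem G K (ξ.take n) * ofE G K (ξ.edges n) := by
  simp [pathElem, take, List.range_succ, mul_assoc]

theorem pathStarElem_take_zero : pathStarElem G K (ξ.take 0) = ofV G K ξ.src := by
  simp [pathStarElem, take]

theorem pathStarElem_take_succ (n : ℕ) :
    pathStarElem G K (ξ.take (n + 1)) = ofG G K (ξ.edges n) * pathStarElem G K (ξ.take n) := by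
  simp [pathStarElem, take, List.range_succ, mul_assoc]

theorem ofV_rng_mul_pathStarElem_take (n : ℕ) :
    ofV G K (ξ.take n).rng * pathStarElem G K (ξ.take n) = pathStarElem G K (ξ.take n) := by
  rw [take_rng]
  cases n with
  | zero => rw [pathStarElem_take_zero]; exact ofV_mul_self K ξ.src
  | succ n => rw [pathStarElem_take_succ, ← mul_assoc, ← ξ.chain n, ofV_r_mul_ofG]

end InfPath

def FinPath.cons (e : G.E) (μ : G.FinPath) (h : G.r e = μ.src) : G.FinPath where
  src := G.s e
  edges := e :: μ.edges
  src_eq f hf := by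
    simp only [List.head?_cons, Option.mem_def, Option.some.injEq] at hf
    rw [hf]
  chain := by
    show List.IsChain _ _
    rw [List.isChain_cons]
    exact ⟨fun b hb => by rw [h, ← μ.src_eq b hb], μ.chain⟩

def FinPath.tail (μ : G.FinPath) (e : G.E) (rest : List G.E) (he : μ.edges = e :: rest) :
    G.FinPath where
  src := G.r e
  edges := rest
  src_eq f hf := by
    have := μ.chain
    rw [he] at this; change List.IsChain _ _ at this; rw [List.isChain_cons] at this
    exact (this.1 f hf).symm
  chain := by
    have := μ.chain
    rw [he] at this; change List.IsChain _ _ at this; rw [List.isChain_cons] at this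
    exact this.2

theorem FinPath.rng_cons (e : G.E) (μ : G.FinPath) (h : G.r e = μ.src) :
    (μ.cons e h).rng = μ.rng := by
  rcases he : μ.edges with _ | ⟨a, l⟩
  · simp [FinPath.rng, FinPath.cons, he, h]
  · simp [FinPath.rng, FinPath.cons, he, List.getLast?_eq_some_getLast]

theorem FinPath.rng_tail (μ : G.FinPath) (e : G.E) (rest : List G.E) (he : μ.edges = e :: rest) :
    (μ.tail e rest he).rng = μ.rng := by
  rcases rest with _ | ⟨a, l⟩
  · simp [FinPath.rng, FinPath.tail, he]
  · simp [FinPath.rng, FinPath.tail, he, List.getLast?_eq_some_getLast]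

theorem pathElem_cons (e : G.E) (μ : G.FinPath) (h : G.r e = μ.src) :
    pathElem G K (μ.cons e h) = ofE G K e * pathElem G K μ := by
  show ofV G K (G.s e) * ((e :: μ.edges).map (ofE G K)).prod = _
  rw [List.map_cons, List.prod_cons, ← mul_assoc, ofV_s_mul_ofE, pathElem, ← mul_assoc, ← h,
    ofE_mul_ofV_r]

theorem pathElem_eq_ofE_mul_tail (μ : G.FinPath) (e : G.E) (rest : List G.E)
    (he : μ.edges = e :: rest) :
    pathElem G K μ = ofE G K e * pathElem G K (μ.tail e rest he) := by
  have hsrc : μ.src = G.s e := (μ.src_eq e (by simp [he])).symm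
  rw [pathElem, he, hsrc, List.map_cons, List.prod_cons, ← mul_assoc, ofV_s_mul_ofE]
  show _ = ofE G K e * (ofV G K (G.r e) * (rest.map (ofE G K)).prod)
  rw [← mul_assoc, ofE_mul_ofV_r]

end

def InfPath.NoExit (ξ : G.InfPath) : Prop := ∀ l e, G.s e = G.s (ξ.edges l) → e = ξ.edges l

theorem exists_noExit_of_isCat_self {c : G.FinPath} {p : G.BPath} (hc : 0 < c.length)
    (hexit : ¬ c.HasExit) (hp : IsCat c p p) :
    ∃ ξ : G.InfPath, p = ξ.toBPath ∧ ξ.NoExit ∧ ξ.src = c.src := by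
  obtain ⟨ξ, rfl⟩ := exists_eq_toBPath_of_isCat_self hc hp
  obtain ⟨hpre, hshift⟩ :
      (∀ i (h : i < c.edges.length), ξ.edges i = c.edges.get ⟨i, h⟩) ∧
      ∀ i, ξ.edges (c.edges.length + i) = ξ.edges i := hp.2
  have hper : ξ.drop c.length = ξ := InfPath.ext' hshift
  refine ⟨ξ, rfl, fun l e he => ?_, (congrArg FinPath.src (isCat_toBPath_iff.1 hp).1).symm⟩
  have hl : l % c.length < c.edges.length := Nat.mod_lt _ hc
  rw [← ξ.edges_mod_of_drop_eq hper, hpre _ hl] at he ⊢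
  by_contra hne
  exact hexit ⟨_, hl, e, he, hne⟩

namespace InfPath.NoExit

variable (K : Type) [Field K] {ζ : G.InfPath} (hζ : ζ.NoExit)
include hζ

theorem ofV_eq_ofE_mul_ofG (l : ℕ) :
    ofV G K (G.s (ζ.edges l)) = ofE G K (ζ.edges l) * ofG G K (ζ.edges l) :=
  ofV_eq_ofE_mul_ofG_of_unique K fun f => ⟨hζ l f, fun h => h ▸ rfl⟩

theorem pathElem_take_mul_pathStarElem_take_succ {η : G.InfPath} {m n : ℕ}
    (h : η.edges m = ζ.edges n) :
    pathElem G K (η.take m) * pathStarElem G K (ζ.take n) =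
      pathElem G K (η.take (m + 1)) * pathStarElem G K (ζ.take (n + 1)) := by
  rw [InfPath.pathElem_take_succ, InfPath.pathStarElem_take_succ, mul_assoc,
    ← mul_assoc (ofE G K _), h, ← hζ.ofV_eq_ofE_mul_ofG K, ← InfPath.take_rng,
    InfPath.ofV_rng_mul_pathStarElem_take]

theorem pathElem_take_mul_pathStarElem_take_add {η : G.InfPath} {m n : ℕ}
    (h : η.drop m = ζ.drop n) (d : ℕ) :
    pathElem G K (η.take m) * pathStarElem G K (ζ.take n) =
      pathElem G K (η.take (m + d)) * pathStarElem G K (ζ.take (n + d)) := by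
  induction d with
  | zero => rfl
  | succ d ih =>
    have hd : η.edges (m + d) = ζ.edges (n + d) := by
      simpa using congrArg (·.edges 0) (InfPath.drop_eq_drop_add h d)
    rw [ih, hζ.pathElem_take_mul_pathStarElem_take_succ K hd]
    rfl

theorem pathElem_take_mul_pathStarElem_take_eq {η : G.InfPath} {m n m' n' : ℕ}
    (h : η.drop m = ζ.drop n) (h' : η.drop m' = ζ.drop n') (hk : (m : ℤ) - n = m' - n') :
    pathElem G K (η.take m) * pathStarElem G K (ζ.take n) =
      pathElem G K (η.take m') * pathStarElem G K (ζ.take n') := by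
  rcases le_total n n' with hn | hn
  · obtain ⟨d, rfl⟩ := Nat.exists_eq_add_of_le hn
    obtain rfl : m' = m + d := by omega
    exact hζ.pathElem_take_mul_pathStarElem_take_add K h d
  · obtain ⟨d, rfl⟩ := Nat.exists_eq_add_of_le hn
    obtain rfl : m = m' + d := by omega
    exact (hζ.pathElem_take_mul_pathStarElem_take_add K h' d).symm

theorem pathElem_mul_pathStarElem_eq {y t t' : G.BPath} {μ ν μ' ν' : G.FinPath}
    (hμ : IsCat μ t y) (hν : IsCat ν t ζ.toBPath) (hμ' : IsCat μ' t' y)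
    (hν' : IsCat ν' t' ζ.toBPath)
    (hk : (μ.length : ℤ) - ν.length = μ'.length - ν'.length) :
    pathElem G K μ * pathStarElem G K ν = pathElem G K μ' * pathStarElem G K ν' := by
  obtain ⟨η, rfl⟩ := exists_eq_toBPath_of_tailEqLag ⟨μ, ν, t, hμ, hν, rfl⟩
  obtain ⟨hμη, rfl⟩ := isCat_toBPath_iff.1 hμ
  obtain ⟨hνζ, hdrop⟩ := isCat_toBPath_iff.1 hν
  obtain ⟨hμη', rfl⟩ := isCat_toBPath_iff.1 hμ'
  obtain ⟨hνζ', hdrop'⟩ := isCat_toBPath_iff.1 hν'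
  calc pathElem G K μ * pathStarElem G K ν
      = pathElem G K (η.take μ.length) * pathStarElem G K (ζ.take ν.length) := by
        rw [← hμη, ← hνζ]
    _ = pathElem G K (η.take μ'.length) * pathStarElem G K (ζ.take ν'.length) :=
        hζ.pathElem_take_mul_pathStarElem_take_eq K (InfPath.toBPath_injective hdrop)
          (InfPath.toBPath_injective hdrop') hk
    _ = pathElem G K μ' * pathStarElem G K ν' := by rw [← hμη', ← hνζ']

end InfPath.NoExit

section

variable {K : Type} [Field K]

theorem InfPath.edges_eq_of_take_eq {ξ η : G.InfPath} {N j : ℕ} (h : ξ.take N = η.take N)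
    (hj : j < N) : ξ.edges j = η.edges j := by
  simpa [InfPath.take, hj] using congrArg (fun μ : G.FinPath => μ.edges[j]?) h

theorem Lset.tailEqLag {x : G.BPath} (yk : Lset G x) : TailEqLag yk.1.1 x yk.1.2 := yk.2

def Lset.base (x : G.BPath) : Lset G x := ⟨(x, 0), tailEqLag_refl x⟩

noncomputable def Lset.monomial (K : Type) [Field K] {x : G.BPath} (yk : Lset G x) :
    LPA G K :=
  pathElem G K (Lset.tailEqLag yk).choose *
    pathStarElem G K (Lset.tailEqLag yk).choose_spec.choose

theorem Lset.exists_monomial_eq {x : G.BPath} (yk : Lset G x) :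
    ∃ (μ ν : G.FinPath) (t : G.BPath), IsCat μ t yk.1.1 ∧ IsCat ν t x ∧
      (μ.length : ℤ) - ν.length = yk.1.2 ∧
      Lset.monomial K yk = pathElem G K μ * pathStarElem G K ν := by
  obtain ⟨t, h⟩ := (Lset.tailEqLag yk).choose_spec.choose_spec
  exact ⟨_, _, t, h.1, h.2.1, h.2.2, rfl⟩

noncomputable def monomialMap (K : Type) [Field K] (x : G.BPath) :
    KLCarrier G K x →ₗ[K] LPA G K :=
  Finsupp.linearCombination K (Lset.monomial K)

noncomputable def evalAt {x : G.BPath} (ρ : LPA G K →ₐ[K] Module.End K (KLCarrier G K x))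
    (w : KLCarrier G K x) : LPA G K →ₗ[K] KLCarrier G K x :=
  LinearMap.applyₗ w ∘ₗ ρ.toLinearMap

@[simp] theorem evalAt_apply {x : G.BPath} (ρ : LPA G K →ₐ[K] Module.End K (KLCarrier G K x))
    (w : KLCarrier G K x) (a : LPA G K) : evalAt ρ w a = ρ a w := rfl

theorem monomialMap_single {x : G.BPath} (yk : Lset G x) :
    monomialMap K x (Finsupp.single yk 1) = Lset.monomial K yk := by
  simp [monomialMap]

theorem monomialMap_mem_LPAdeg {x : G.BPath} {k : ℤ} {w : KLCarrier G K x}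
    (hw : w ∈ KLgr G K x k) : monomialMap K x w ∈ LPAdeg G K k := by
  refine (Submodule.span_le (p := (LPAdeg G K k).comap (monomialMap K x))).2 ?_ hw
  rintro _ ⟨yk, rfl, rfl⟩
  obtain ⟨μ, ν, t, hμ, hν, hk, he⟩ := Lset.exists_monomial_eq (K := K) yk
  rw [SetLike.mem_coe, Submodule.mem_comap, monomialMap_single, he]
  exact Submodule.subset_span ⟨μ, ν, hμ.1.trans hν.1.symm, hk, rfl⟩

theorem KLgr_le_supported (x : G.BPath) (k : ℤ) :
    KLgr G K x k ≤ Finsupp.supported K K {yk : Lset G x | yk.1.2 = k} :=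
  Submodule.span_le.2 fun _ ⟨_, hyk, he⟩ => he ▸ Finsupp.single_mem_supported K 1 hyk

theorem Lset.eventually_not_isCat_take {ζ : G.InfPath} {yk yk' : Lset G ζ.toBPath}
    (hne : yk ≠ yk') (hk : yk.1.2 = yk'.1.2) {η : G.InfPath} (hη : yk'.1.1 = η.toBPath) :
    ∀ᶠ N in atTop, ¬ ∃ p, IsCat (η.take N) p yk.1.1 := by
  obtain ⟨θ, hθ⟩ := exists_eq_toBPath_of_tailEqLag (Lset.tailEqLag yk)
  obtain ⟨j, hj⟩ : ∃ j, η.edges j ≠ θ.edges j := by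
    by_contra! h
    exact hne (Subtype.ext (Prod.ext (by rw [hθ, hη, InfPath.ext' h]) hk))
  refine eventually_atTop.2 ⟨j + 1, fun N hN ⟨p, hp⟩ => hj ?_⟩
  rw [hθ, isCat_toBPath_iff, InfPath.take_length] at hp
  exact InfPath.edges_eq_of_take_eq hp.1 (by omega)

namespace KLSpec

variable {x : G.BPath} {ρ : LPA G K →ₐ[K] Module.End K (KLCarrier G K x)}
  (hρ : KLSpec G K x ρ)
include hρ

theorem apply_monomial_base (yk : Lset G x) :
    ρ (Lset.monomial K yk) (Finsupp.single (Lset.base x) 1) = Finsupp.single yk 1 := by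
  obtain ⟨μ, ν, t, hμ, hν, hk, he⟩ := Lset.exists_monomial_eq (K := K) yk
  rw [he]
  exact hρ.1 μ ν (hμ.1.trans hν.1.symm) _ yk t hν hμ (by simp only [Lset.base]; omega)

theorem evalAt_monomialMap (w : KLCarrier G K x) :
    evalAt ρ (Finsupp.single (Lset.base x) 1) (monomialMap K x w) = w := by
  suffices evalAt ρ (Finsupp.single (Lset.base x) 1) ∘ₗ monomialMap K x = LinearMap.id from
    LinearMap.congr_fun this w
  refine Finsupp.lhom_ext' fun yk => LinearMap.ext_ring ?_
  simpa [monomialMap_single] using hρ.apply_monomial_base yk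

end KLSpec

namespace KLSpec

variable {ζ : G.InfPath} {ρ : LPA G K →ₐ[K] Module.End K (KLCarrier G K ζ.toBPath)}
  (hρ : KLSpec G K ζ.toBPath ρ)
include hρ

theorem evalAt_mem_KLgr {k : ℤ} {a : LPA G K} (ha : a ∈ LPAdeg G K k) :
    evalAt ρ (Finsupp.single (Lset.base ζ.toBPath) 1) a ∈ KLgr G K ζ.toBPath k := by
  refine (Submodule.span_le (p := (KLgr G K ζ.toBPath k).comap (evalAt ρ _))).2 ?_ ha
  rintro _ ⟨μ, ν, hrng, hk, rfl⟩
  rw [SetLike.mem_coe, Submodule.mem_comap, evalAt_apply]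
  by_cases hν : ∃ t, IsCat ν t ζ.toBPath
  · obtain ⟨t, hνt⟩ := hν
    obtain ⟨-, rfl⟩ := isCat_toBPath_iff.1 hνt
    have hsrc : μ.rng = (ζ.drop ν.length).src := by
      rw [hrng, hνt.1]; rfl
    have hy : TailEqLag (μ.appendInf _ hsrc).toBPath ζ.toBPath k :=
      ⟨μ, ν, _, isCat_appendInf μ _ hsrc, hνt, hk⟩
    rw [hρ.1 μ ν hrng (Lset.base _) ⟨(_, k), hy⟩ _ hνt (isCat_appendInf μ _ hsrc)
      (by simp only [Lset.base]; omega)]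
    exact Submodule.subset_span ⟨⟨_, hy⟩, rfl, rfl⟩
  · rw [hρ.2 μ ν hrng _ hν]
    exact Submodule.zero_mem _

variable {P : Submodule K (KLCarrier G K ζ.toBPath)}
  (hP : ∀ (a : LPA G K), ∀ w ∈ P, ρ a w ∈ P)
include hP

theorem exists_single_mem {k : ℤ} {z : KLCarrier G K ζ.toBPath} (hzk : z ∈ KLgr G K _ k)
    (hzP : z ∈ P) (hz : z ≠ 0) : ∃ yk, Finsupp.single yk 1 ∈ P := by
  obtain ⟨y₀, hy₀⟩ := Finsupp.support_nonempty_iff.2 hz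
  have hdeg : ∀ yk ∈ z.support, yk.1.2 = k := fun yk h => KLgr_le_supported _ k hzk h
  obtain ⟨η, hη⟩ := exists_eq_toBPath_of_tailEqLag (Lset.tailEqLag y₀)
  obtain ⟨N, hN⟩ := ((eventually_all_finset (z.support.erase y₀)).2 fun yk hyk =>
    Lset.eventually_not_isCat_take (Finset.ne_of_mem_erase hyk)
      ((hdeg _ (Finset.mem_of_mem_erase hyk)).trans (hdeg _ hy₀).symm) hη).exists
  have hq : ((η.drop N).toBPath, k - N) ∈ Lset G ζ.toBPath := by
    obtain ⟨m, n, hmn, hdrop⟩ := tailEqLag_toBPath_iff.1 (hη ▸ Lset.tailEqLag y₀)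
    refine tailEqLag_toBPath_iff.2 ⟨m, n + N, by rw [← hdeg _ hy₀]; push_cast; omega, ?_⟩
    rw [InfPath.drop_drop, Nat.add_comm, ← InfPath.drop_eq_drop_add hdrop, Nat.add_comm]
  have hrng : ((η.drop N).take 0).rng = (η.take N).rng := by
    rw [InfPath.take_rng, InfPath.take_rng]; rfl
  have hy₀cat : IsCat (η.take N) (η.drop N).toBPath y₀.1.1 := hη ▸ isCat_take_drop η N
  have hcat : IsCat ((η.drop N).take 0) (η.drop N).toBPath (η.drop N).toBPath := by
    simpa using isCat_take_drop (η.drop N) 0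
  obtain ⟨T, hcut⟩ : ∃ T, ρ T z = z y₀ • Finsupp.single ⟨(_, k - N), hq⟩ 1 :=
    ⟨_, by rw [Finsupp.linearMap_apply_eq_smul_of_apply_single _ z y₀ fun yk hyk hne =>
      hρ.2 _ _ hrng yk (hN yk (Finset.mem_erase.2 ⟨hne, hyk⟩)),
      hρ.1 _ _ hrng y₀ ⟨_, hq⟩ _ hy₀cat hcat (by simp [hdeg _ hy₀])]⟩
  refine ⟨⟨_, hq⟩, ?_⟩
  have h := P.smul_mem (z y₀)⁻¹ (hP T z hzP)
  rwa [hcut, smul_smul, inv_mul_cancel₀ (Finsupp.mem_support_iff.1 hy₀), one_smul] at h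

theorem eq_top_of_single_mem {yk : Lset G ζ.toBPath} (hyk : Finsupp.single yk 1 ∈ P) :
    P = ⊤ := by
  have hall : ∀ zk, Finsupp.single zk 1 ∈ P := by
    intro zk
    obtain ⟨α, β, t, hα, hβ, hlag⟩ := tailEqLag_sub (Lset.tailEqLag yk) (Lset.tailEqLag zk)
    rw [← hρ.1 α β (hα.1.trans hβ.1.symm) yk zk t hβ hα (by omega)]
    exact hP _ _ hyk
  rw [eq_top_iff, ← Finsupp.basisSingleOne.span_eq, Submodule.span_le]
  rintro _ ⟨zk, rfl⟩
  simpa using hall zk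

theorem eq_bot_or_eq_top (hPgr : GradedCarrier (fun k => KLgr G K ζ.toBPath k) P) :
    P = ⊥ ∨ P = ⊤ := by
  refine or_iff_not_imp_left.2 fun hbot => ?_
  obtain ⟨m, hmP, hm⟩ := (Submodule.ne_bot_iff P).1 hbot
  obtain ⟨l, hl, rfl⟩ := hPgr m hmP
  obtain ⟨z, hzl, hz⟩ : ∃ z ∈ l, z ≠ 0 := by
    by_contra! h
    exact hm (List.sum_eq_zero h)
  obtain ⟨hzP, k, hzk⟩ := hl z hzl
  obtain ⟨yk, hyk⟩ := hρ.exists_single_mem hP hzk hzP hz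
  exact hρ.eq_top_of_single_mem hP hyk

end KLSpec

end

section

variable (K : Type) [Field K]

def prefixMonomials (ξ : G.InfPath) : Set (LPA G K) :=
  {a | ∃ (μ : G.FinPath) (l : ℕ), μ.rng = G.s (ξ.edges l) ∧
    a = pathElem G K μ * pathStarElem G K (ξ.take l)}

variable {K} {ξ : G.InfPath}

theorem ofV_mul_mem_span_prefixMonomials (w : G.V) {a : LPA G K}
    (ha : a ∈ prefixMonomials K ξ) :
    ofV G K w * a ∈ Submodule.span K (prefixMonomials K ξ) := by
  obtain ⟨μ, l, hrng, rfl⟩ := ha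
  by_cases h : w = μ.src
  · rw [← mul_assoc, h, ofV_src_mul_pathElem]
    exact Submodule.subset_span ⟨μ, l, hrng, rfl⟩
  · rw [← mul_assoc, ofV_mul_pathElem_of_ne K h, zero_mul]
    exact Submodule.zero_mem _

theorem ofE_mul_mem_span_prefixMonomials (e : G.E) {a : LPA G K}
    (ha : a ∈ prefixMonomials K ξ) :
    ofE G K e * a ∈ Submodule.span K (prefixMonomials K ξ) := by
  obtain ⟨μ, l, hrng, rfl⟩ := ha
  by_cases h : G.r e = μ.src
  · rw [← mul_assoc, ← pathElem_cons K e μ h]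
    exact Submodule.subset_span ⟨μ.cons e h, l, (FinPath.rng_cons e μ h).trans hrng, rfl⟩
  · rw [← mul_assoc, pathElem, ← mul_assoc, ofE_mul_ofV_of_ne K h, zero_mul, zero_mul]
    exact Submodule.zero_mem _

namespace InfPath.NoExit

variable (hξ : ξ.NoExit)
include hξ

theorem ofG_mul_mem_span_prefixMonomials (e : G.E) {a : LPA G K}
    (ha : a ∈ prefixMonomials K ξ) :
    ofG G K e * a ∈ Submodule.span K (prefixMonomials K ξ) := by
  obtain ⟨μ, l, hrng, rfl⟩ := ha
  rcases he : μ.edges with _ | ⟨e', rest⟩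
  · rw [pathElem_of_edges_eq_nil K he, ← FinPath.rng_of_edges_eq_nil he, hrng, ← mul_assoc]
    by_cases hes : G.s e = G.s (ξ.edges l)
    · obtain rfl := hξ l e hes
      rw [ofG_mul_ofV_s, ← InfPath.pathStarElem_take_succ]
      refine Submodule.subset_span ⟨vertexPath G (G.s (ξ.edges (l + 1))), l + 1, rfl, ?_⟩
      rw [pathElem_vertexPath, ← InfPath.take_rng, InfPath.ofV_rng_mul_pathStarElem_take]
    · rw [ofG_mul_ofV_of_ne K hes, zero_mul]
      exact Submodule.zero_mem _
  · rw [pathElem_eq_ofE_mul_tail K μ e' rest he, ← mul_assoc, ← mul_assoc]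
    by_cases hee : e = e'
    · subst hee
      rw [ofG_mul_ofE_self, show G.r e = (μ.tail e rest he).src from rfl, ofV_src_mul_pathElem]
      exact Submodule.subset_span ⟨_, l, (FinPath.rng_tail μ e rest he).trans hrng, rfl⟩
    · rw [ofG_mul_ofE_of_ne K hee, zero_mul, zero_mul]
      exact Submodule.zero_mem _

theorem mul_mem_span_prefixMonomials (a : LPA G K) {m : LPA G K}
    (hm : m ∈ Submodule.span K (prefixMonomials K ξ)) :
    a * m ∈ Submodule.span K (prefixMonomials K ξ) := by
  induction a using LPA.induction generalizing m with
  | h_alg k => rw [← Algebra.smul_def]; exact Submodule.smul_mem _ k hm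
  | hV w =>
    exact Submodule.mul_mem_span_of_forall_mul_mem (fun _ => ofV_mul_mem_span_prefixMonomials w) hm
  | hE e =>
    exact Submodule.mul_mem_span_of_forall_mul_mem (fun _ => ofE_mul_mem_span_prefixMonomials e) hm
  | hG e =>
    exact Submodule.mul_mem_span_of_forall_mul_mem
      (fun _ => hξ.ofG_mul_mem_span_prefixMonomials e) hm
  | hadd a b ha hb => rw [add_mul]; exact Submodule.add_mem _ (ha hm) (hb hm)
  | hmul a b ha hb => rw [mul_assoc]; exact ha (hb hm)

theorem span_ofV_le_span_prefixMonomials :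
    (Submodule.span (LPA G K) {ofV G K ξ.src}).restrictScalars K ≤
      Submodule.span K (prefixMonomials K ξ) := by
  intro z hz
  obtain ⟨a, rfl⟩ := Submodule.mem_span_singleton.1 hz
  refine hξ.mul_mem_span_prefixMonomials a
    (Submodule.subset_span ⟨vertexPath G ξ.src, 0, rfl, ?_⟩)
  rw [pathElem_vertexPath, InfPath.pathStarElem_take_zero, ofV_mul_self]

theorem prefixMonomials_subset_range :
    prefixMonomials K ξ ⊆ LinearMap.range (monomialMap K ξ.toBPath) := by
  rintro _ ⟨μ, l, hrng, rfl⟩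
  have hsrc : μ.rng = (ξ.drop l).src := hrng
  have hy : ((μ.appendInf _ hsrc).toBPath, (μ.length : ℤ) - l) ∈ Lset G ξ.toBPath :=
    ⟨μ, ξ.take l, _, isCat_appendInf μ _ hsrc, isCat_take_drop ξ l, by simp⟩
  obtain ⟨μ', ν', t', hμ', hν', hk', he⟩ := Lset.exists_monomial_eq (K := K) ⟨_, hy⟩
  refine ⟨Finsupp.single ⟨_, hy⟩ 1, ?_⟩
  rw [monomialMap_single, he]
  exact hξ.pathElem_mul_pathStarElem_eq K hμ' hν' (isCat_appendInf μ _ hsrc)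
    (isCat_take_drop ξ l) (by simpa using hk')

theorem leftInvOn_monomialMap_evalAt
    {ρ : LPA G K →ₐ[K] Module.End K (KLCarrier G K ξ.toBPath)}
    (hρ : KLSpec G K ξ.toBPath ρ) :
    Set.LeftInvOn (monomialMap K ξ.toBPath) (evalAt ρ (Finsupp.single (Lset.base _) 1))
      (Submodule.span (LPA G K) {ofV G K ξ.src}) := by
  intro z hz
  obtain ⟨w, rfl⟩ := Submodule.span_le.2 hξ.prefixMonomials_subset_range
    (hξ.span_ofV_le_span_prefixMonomials hz)
  rw [hρ.evalAt_monomialMap]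

end InfPath.NoExit

theorem monomialMap_mem_span_ofV (ξ : G.InfPath) (w : KLCarrier G K ξ.toBPath) :
    monomialMap K ξ.toBPath w ∈ Submodule.span (LPA G K) {ofV G K ξ.src} := by
  suffices LinearMap.range (monomialMap K ξ.toBPath) ≤
      (Submodule.span (LPA G K) {ofV G K ξ.src}).restrictScalars K from this ⟨w, rfl⟩
  rw [monomialMap, Finsupp.range_linearCombination, Submodule.span_le]
  rintro _ ⟨yk, rfl⟩
  obtain ⟨μ, ν, t, -, hν, -, he⟩ := Lset.exists_monomial_eq (K := K) yk
  have hsrc : ν.src = ξ.src := congrArg FinPath.src (isCat_toBPath_iff.1 hν).1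
  rw [SetLike.mem_coe, Submodule.restrictScalars_mem, he, ← hsrc]
  exact pathStarElem_mem_span_ofV K ν _

end

section

variable {K : Type} [Field K]

theorem InfPath.NoExit.exists_gradedEquiv {ξ : G.InfPath} (hξ : ξ.NoExit)
    {ρ : LPA G K →ₐ[K] Module.End K (KLCarrier G K ξ.toBPath)}
    (hρ : KLSpec G K ξ.toBPath ρ) :
    ∃ f : KLCarrier G K ξ.toBPath ≃ₗ[K] ↥(Submodule.span (LPA G K) {ofV G K ξ.src}),
      (∀ (η : LPA G K) (w : KLCarrier G K ξ.toBPath),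
        (f (ρ η w) : LPA G K) = η • (f w : LPA G K)) ∧
      (∀ k : ℤ, ∀ w ∈ KLgr G K ξ.toBPath k, (f w : LPA G K) ∈ LPAdeg G K k) ∧
      (∀ (k : ℤ) (z : ↥(Submodule.span (LPA G K) {ofV G K ξ.src})),
        (z : LPA G K) ∈ LPAdeg G K k → f.symm z ∈ KLgr G K ξ.toBPath k) := by
  have hinv := hξ.leftInvOn_monomialMap_evalAt hρ
  let f : KLCarrier G K ξ.toBPath ≃ₗ[K] ↥(Submodule.span (LPA G K) {ofV G K ξ.src}) :=
    { toFun w := ⟨monomialMap K _ w, monomialMap_mem_span_ofV ξ w⟩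
      map_add' w w' := Subtype.ext (map_add _ w w')
      map_smul' c w := Subtype.ext (map_smul _ c w)
      invFun z := evalAt ρ (Finsupp.single (Lset.base _) 1) z
      left_inv := hρ.evalAt_monomialMap
      right_inv z := Subtype.ext (hinv z.2) }
  refine ⟨f, fun a w => ?_, fun k w hw => monomialMap_mem_LPAdeg hw,
    fun k z hz => hρ.evalAt_mem_KLgr hz⟩
  show monomialMap K _ (ρ a w) = a • monomialMap K _ w
  conv_lhs => rw [← hρ.evalAt_monomialMap w]
  rw [evalAt_apply, ← Module.End.mul_apply, ← map_mul, ← smul_eq_mul, ← evalAt_apply,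
    hinv (Submodule.smul_mem _ a (monomialMap_mem_span_ofV ξ w))]

theorem KLSpec.span_ofV_ne_bot {ξ : G.InfPath}
    {ρ : LPA G K →ₐ[K] Module.End K (KLCarrier G K ξ.toBPath)} (hρ : KLSpec G K ξ.toBPath ρ) :
    Submodule.span (LPA G K) {ofV G K ξ.src} ≠ ⊥ := by
  intro hbot
  have h := monomialMap_mem_span_ofV ξ (Finsupp.single (Lset.base ξ.toBPath) (1 : K))
  rw [hbot, Submodule.mem_bot] at h
  have h1 := hρ.evalAt_monomialMap (Finsupp.single (Lset.base ξ.toBPath) 1)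
  rw [h, map_zero] at h1
  exact one_ne_zero (Finsupp.single_eq_zero.1 h1.symm)

theorem eq_bot_or_eq_of_injOn {x : G.BPath} {ρ : LPA G K →ₐ[K] Module.End K (KLCarrier G K x)}
    {b : KLCarrier G K x}
    (hsimple : ∀ P : Submodule K (KLCarrier G K x),
      (∀ (a : LPA G K), ∀ w ∈ P, ρ a w ∈ P) →
      GradedCarrier (fun k => KLgr G K x k) ↑P → P = ⊥ ∨ P = ⊤)
    (hdeg : ∀ k a, a ∈ LPAdeg G K k → evalAt ρ b a ∈ KLgr G K x k)
    {N : Submodule (LPA G K) (LPA G K)} (hinj : Set.InjOn (evalAt ρ b) N)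
    {Q : Submodule (LPA G K) (LPA G K)} (hQ : Q ≤ N)
    (hQgr : GradedCarrier (fun k => LPAdeg G K k) ↑Q) : Q = ⊥ ∨ Q = N := by
  let P := (Q.restrictScalars K).map (evalAt ρ b)
  have hP : ∀ (a : LPA G K), ∀ w ∈ P, ρ a w ∈ P := by
    rintro a _ ⟨q, hq, rfl⟩
    refine ⟨a * q, Q.smul_mem a hq, ?_⟩
    simp
  have hPgr : GradedCarrier (fun k => KLgr G K x k) ↑P := by
    rintro _ ⟨q, hq, rfl⟩
    obtain ⟨l, hl, rfl⟩ := hQgr q hq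
    refine ⟨l.map (evalAt ρ b), ?_, (map_list_sum _ _).symm⟩
    simp only [List.mem_map, forall_exists_index, and_imp, forall_apply_eq_imp_iff₂]
    intro q hq
    obtain ⟨hqQ, k, hqk⟩ := hl q hq
    exact ⟨⟨q, hqQ, rfl⟩, k, hdeg k q hqk⟩
  rcases hsimple P hP hPgr with hbot | htop
  · refine Or.inl (eq_bot_iff.2 fun q hq => ?_)
    have h0 : evalAt ρ b q ∈ P := ⟨q, hq, rfl⟩
    rw [hbot, Submodule.mem_bot] at h0
    exact hinj (hQ hq) N.zero_mem (h0.trans (map_zero _).symm)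
  · refine Or.inr (le_antisymm hQ fun z hz => ?_)
    obtain ⟨q, hq, hqz⟩ : evalAt ρ b z ∈ P := htop ▸ Submodule.mem_top
    exact hinj (hQ hq) hz hqz ▸ hq

end

end DirGraph

open DirGraph

/-- for a cycle `c` without exits based at `v`, the `ℤ`-graded
`L_K(E)`-module `K L_{c^∞}` is graded isomorphic to `N_{vc} = L_K(E)v` (with its grading
induced from `L_K(E)`), and both are graded simple. -/
theorem stmt_12 (G : DirGraph) (K : Type) [Field K]
    (c : G.FinPath) (v : G.V) (hcyc : c.IsCycle) (hnoexit : ¬ c.HasExit)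
    (hbase : c.src = v) (p₀ : G.BPath) (hp : IsCat c p₀ p₀)
    (ρ : LPA G K →ₐ[K] Module.End K (KLCarrier G K p₀)) (hρ : KLSpec G K p₀ ρ) :
    -- graded isomorphism `K L_{c^∞} ≅ L_K(E) v`
    (∃ f : KLCarrier G K p₀ ≃ₗ[K] ↥(Submodule.span (LPA G K) {ofV G K v}),
      (∀ (η : LPA G K) (w : KLCarrier G K p₀),
        (f (ρ η w) : LPA G K) = η • (f w : LPA G K)) ∧
      (∀ k : ℤ, ∀ w ∈ KLgr G K p₀ k, (f w : LPA G K) ∈ LPAdeg G K k) ∧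
      (∀ (k : ℤ) (z : ↥(Submodule.span (LPA G K) {ofV G K v})),
        (z : LPA G K) ∈ LPAdeg G K k → f.symm z ∈ KLgr G K p₀ k)) ∧
    -- `K L_{c^∞}` is graded simple
    ((∃ w : KLCarrier G K p₀, w ≠ 0) ∧
      ∀ P : Submodule K (KLCarrier G K p₀), (∀ (η : LPA G K), ∀ w ∈ P, ρ η w ∈ P) →
        GradedCarrier (fun k => KLgr G K p₀ k) ↑P → P = ⊥ ∨ P = ⊤) ∧
    -- `N_{vc}` is graded simple
    (Submodule.span (LPA G K) {ofV G K v} ≠ ⊥ ∧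
      ∀ Q : Submodule (LPA G K) (LPA G K), Q ≤ Submodule.span (LPA G K) {ofV G K v} →
        GradedCarrier (fun k => LPAdeg G K k) ↑Q →
        Q = ⊥ ∨ Q = Submodule.span (LPA G K) {ofV G K v}) := by
  obtain ⟨ξ, rfl, hξ, hsrc⟩ := exists_noExit_of_isCat_self hcyc.1.1 hnoexit hp
  subst hbase
  rw [← hsrc]
  have hsimple := fun P hP => hρ.eq_bot_or_eq_top (P := P) hP
  refine ⟨hξ.exists_gradedEquiv hρ,
    ⟨⟨Finsupp.single (Lset.base _) 1, Finsupp.single_ne_zero.2 one_ne_zero⟩, hsimple⟩,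
    hρ.span_ofV_ne_bot, fun Q hQ hQgr => ?_⟩
  exact eq_bot_or_eq_of_injOn hsimple (fun k a => hρ.evalAt_mem_KLgr)
    (hξ.leftInvOn_monomialMap_evalAt hρ).injOn hQ hQgr
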